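/- Level-crossing principle, lower level-passage time: define the stopping time τ̲ := min{ v ∈ {0,...,N-1} : L_v ≥ 0 } ∧ N. Then τ̲ is optimal for the optimal stopping problem under the nonlinear expectation, i.e., for every stopping time τ ∈ T_{0,N}, E_0[X_τ] ≤ E_0[X_{τ̲}] a.s. -/

import Mathlib

open MeasureTheory Filter

/-- Running maximum `max_{t ≤ v ≤ u} L v ω` (intended for `t ≤ u`). -/
noncomputable def runMax {Ω : Type*} (L : ℕ → Ω → ℝ) (t u : ℕ) (ω : Ω) : ℝ :=
  (Finset.Icc t u).fold max (L t ω) fun v => L v ω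

/-- Running minimum `min_{t ≤ v ≤ u} K v ω` (intended for `t ≤ u`). -/
noncomputable def runMin {Ω : Type*} (K : ℕ → Ω → ℝ) (t u : ℕ) (ω : Ω) : ℝ :=
  (Finset.Icc t u).fold min (K t ω) fun v => K v ω

/-- A discrete-time nonlinear expectation on the horizon `{0, ..., N}`:
a family of maps `E t` sending square-integrable `F N`-measurable random
variables to square-integrable `F t`-measurable random variables, satisfying
monotonicity, strict monotonicity, translation invariance, the tower property,
the zero-one law and monotone convergence. -/
structure NLExp {Ω : Type*} {m0 : MeasurableSpace Ω} (μ : Measure Ω)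
    (F : Filtration ℕ m0) (N : ℕ) where
  E : ℕ → (Ω → ℝ) → Ω → ℝ
  adapted : ∀ t, t ≤ N → ∀ ξ : Ω → ℝ, StronglyMeasurable[F N] ξ → MemLp ξ 2 μ →
    StronglyMeasurable[F t] (E t ξ)
  sqInt : ∀ t, t ≤ N → ∀ ξ : Ω → ℝ, StronglyMeasurable[F N] ξ → MemLp ξ 2 μ →
    MemLp (E t ξ) 2 μ
  mono : ∀ t, t ≤ N → ∀ ξ η : Ω → ℝ, StronglyMeasurable[F N] ξ → MemLp ξ 2 μ →
    StronglyMeasurable[F N] η → MemLp η 2 μ → ξ ≤ᵐ[μ] η → E t ξ ≤ᵐ[μ] E t η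
  strictMono : ∀ t, t ≤ N → ∀ ξ η : Ω → ℝ, StronglyMeasurable[F N] ξ → MemLp ξ 2 μ →
    StronglyMeasurable[F N] η → MemLp η 2 μ → ξ ≤ᵐ[μ] η →
    0 < μ {ω | ξ ω < η ω} → 0 < μ {ω | E t ξ ω < E t η ω}
  translation : ∀ t, t ≤ N → ∀ ξ ζ : Ω → ℝ, StronglyMeasurable[F N] ξ → MemLp ξ 2 μ →
    StronglyMeasurable[F t] ζ → MemLp ζ 2 μ → E t (ξ + ζ) =ᵐ[μ] E t ξ + ζ
  tower : ∀ s t, s ≤ t → t ≤ N → ∀ ξ : Ω → ℝ, StronglyMeasurable[F N] ξ → MemLp ξ 2 μ →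
    E s (E t ξ) =ᵐ[μ] E s ξ
  zeroOne : ∀ t, t ≤ N → ∀ ξ η : Ω → ℝ, StronglyMeasurable[F N] ξ → MemLp ξ 2 μ →
    StronglyMeasurable[F N] η → MemLp η 2 μ → ∀ A : Set Ω, MeasurableSet[F t] A →
    E t (A.indicator ξ + Aᶜ.indicator η) =ᵐ[μ]
      A.indicator (E t ξ) + Aᶜ.indicator (E t η)
  monoConv : ∀ t, t ≤ N → ∀ (ξs : ℕ → Ω → ℝ) (ξ : Ω → ℝ),
    (∀ n, StronglyMeasurable[F N] (ξs n)) → (∀ n, MemLp (ξs n) 2 μ) →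
    StronglyMeasurable[F N] ξ → MemLp ξ 2 μ →
    (∀ᵐ ω ∂μ, (Monotone fun n => ξs n ω) ∨ (Antitone fun n => ξs n ω)) →
    (∀ᵐ ω ∂μ, Tendsto (fun n => ξs n ω) atTop (nhds (ξ ω))) →
    ∀ᵐ ω ∂μ, Tendsto (fun n => E t (ξs n) ω) atTop (nhds (E t ξ ω))

/-!
Write `Ξ t := ∑_{u=t}^{N-1} max_{t≤v≤u} L_v + X_N`, so that `X_t = E_t[Ξ_t]`. Since `E_t` fixes
`F_t`-measurable variables, the zero-one law and the tower property let one replace `X` by `Ξ` at a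
stopping time one date at a time: `E_0[X_σ] = E_0[Ξ_σ]` for every stopping time `σ ≤ N`. Pathwise,
`t ↦ Ξ_t` is maximal at the first time `τ̲` the level `L` becomes nonnegative, and monotonicity of
`E_0` concludes.
-/

open Finset

section StoppedValue

variable {Ω E : Type*} {m0 : MeasurableSpace Ω} {F : Filtration ℕ m0} {N : ℕ}
  {τ : Ω → WithTop ℕ} [NormedAddCommGroup E] {u : ℕ → Ω → E}

theorem stronglyMeasurable_stoppedValue_of_forall_le (hτ : IsStoppingTime F τ)
    (hτN : ∀ ω, τ ω ≤ N) (hu : ∀ n ≤ N, StronglyMeasurable[F N] (u n)) :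
    StronglyMeasurable[F N] (stoppedValue u τ) := by
  rw [stoppedValue_eq' hτN]
  exact Finset.stronglyMeasurable_sum _ fun n hn =>
    (hu n (mem_Iic.1 hn)).indicator (F.mono (mem_Iic.1 hn) _ (hτ.measurableSet_eq n))

theorem memLp_stoppedValue_of_forall_le {p : ENNReal} {μ : Measure Ω} (hτ : IsStoppingTime F τ)
    (hτN : ∀ ω, τ ω ≤ N) (hu : ∀ n ≤ N, MemLp (u n) p μ) : MemLp (stoppedValue u τ) p μ := by
  rw [stoppedValue_eq' hτN]
  exact memLp_finsetSum' _ fun n hn =>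
    (hu n (mem_Iic.1 hn)).indicator (F.le n _ (hτ.measurableSet_eq n))

end StoppedValue

namespace NLExp

variable {Ω : Type*} {m0 : MeasurableSpace Ω} {μ : Measure Ω} {F : Filtration ℕ m0} {N t : ℕ}
  (EE : NLExp μ F N) {ξ η ζ : Ω → ℝ}

theorem E_zero (ht : t ≤ N) : EE.E t 0 =ᵐ[μ] 0 := by
  have h0 : StronglyMeasurable[F N] (0 : Ω → ℝ) := stronglyMeasurable_const
  have hE := EE.adapted t ht 0 h0 .zero
  have hE2 := EE.sqInt t ht 0 h0 .zero
  -- `E_t[E_t 0]` equals `E_t 0` by the tower property and `E_t 0 + E_t 0` by translation.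
  filter_upwards [EE.translation t ht 0 _ h0 .zero hE hE2, EE.tower t t le_rfl ht 0 h0 .zero]
    with ω htrans htower
  simp only [zero_add, Pi.add_apply, Pi.zero_apply] at htrans ⊢
  linarith

theorem E_of_stronglyMeasurable (ht : t ≤ N) (hζ : StronglyMeasurable[F t] ζ)
    (hζ2 : MemLp ζ 2 μ) : EE.E t ζ =ᵐ[μ] ζ := by
  filter_upwards [EE.translation t ht 0 ζ stronglyMeasurable_const .zero hζ hζ2, EE.E_zero ht]
    with ω htrans hzero
  simp_all

theorem E_congr (ht : t ≤ N) (hξ : StronglyMeasurable[F N] ξ) (hξ2 : MemLp ξ 2 μ)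
    (hη : StronglyMeasurable[F N] η) (hη2 : MemLp η 2 μ) (h : ξ =ᵐ[μ] η) :
    EE.E t ξ =ᵐ[μ] EE.E t η :=
  (EE.mono t ht ξ η hξ hξ2 hη hη2 h.le).antisymm (EE.mono t ht η ξ hη hη2 hξ hξ2 h.symm.le)

theorem E_piecewise_congr (ht : t ≤ N) {A : Set Ω} [DecidablePred (· ∈ A)]
    (hA : MeasurableSet[F t] A) (hξ : StronglyMeasurable[F N] ξ) (hξ2 : MemLp ξ 2 μ)
    (hη : StronglyMeasurable[F N] η) (hη2 : MemLp η 2 μ)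
    (hζ : StronglyMeasurable[F N] ζ) (hζ2 : MemLp ζ 2 μ) (h : EE.E t ξ =ᵐ[μ] EE.E t η) :
    EE.E t (A.piecewise ξ ζ) =ᵐ[μ] EE.E t (A.piecewise η ζ) := by
  simp only [← Set.indicator_add_compl_eq_piecewise]
  filter_upwards [EE.zeroOne t ht ξ ζ hξ hξ2 hζ hζ2 A hA, EE.zeroOne t ht η ζ hη hη2 hζ hζ2 A hA, h]
    with ω hξζ hηζ hξη
  simp only [hξζ, hηζ, Pi.add_apply, Set.indicator_apply, hξη]

theorem E_zero_eq_of_forall_E_succ_eq {R : ℕ → Ω → ℝ} (hR : ∀ t, StronglyMeasurable[F N] (R t))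
    (hR2 : ∀ t, MemLp (R t) 2 μ) (hstep : ∀ t ≤ N, EE.E t (R (t + 1)) =ᵐ[μ] EE.E t (R t)) :
    EE.E 0 (R (N + 1)) =ᵐ[μ] EE.E 0 (R 0) := by
  suffices ∀ n ≤ N + 1, EE.E 0 (R n) =ᵐ[μ] EE.E 0 (R 0) from this _ le_rfl
  intro n hn
  induction n with
  | zero => rfl
  | succ t ih =>
    have htN : t ≤ N := Nat.le_of_lt_succ hn
    have hEt u : StronglyMeasurable[F N] (EE.E t (R u)) :=
      (EE.adapted t htN _ (hR u) (hR2 u)).mono (F.mono htN)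
    calc EE.E 0 (R (t + 1)) =ᵐ[μ] EE.E 0 (EE.E t (R (t + 1))) :=
          (EE.tower 0 t t.zero_le htN _ (hR _) (hR2 _)).symm
      _ =ᵐ[μ] EE.E 0 (EE.E t (R t)) :=
          EE.E_congr N.zero_le (hEt _) (EE.sqInt t htN _ (hR _) (hR2 _)) (hEt _)
            (EE.sqInt t htN _ (hR _) (hR2 _)) (hstep t htN)
      _ =ᵐ[μ] EE.E 0 (R t) := EE.tower 0 t t.zero_le htN _ (hR _) (hR2 _)
      _ =ᵐ[μ] EE.E 0 (R 0) := ih (htN.trans N.le_succ)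

/-- Optional sampling for a process represented as `X t = E t (Ξ t)`. -/
theorem E_zero_stoppedValue_eq {X Ξ : ℕ → Ω → ℝ}
    (hX : ∀ t ≤ N, StronglyMeasurable[F t] (X t)) (hX2 : ∀ t ≤ N, MemLp (X t) 2 μ)
    (hΞ : ∀ t ≤ N, StronglyMeasurable[F N] (Ξ t)) (hΞ2 : ∀ t ≤ N, MemLp (Ξ t) 2 μ)
    (hrep : ∀ t ≤ N, EE.E t (Ξ t) =ᵐ[μ] X t) {σ : Ω → ℕ}
    (hσ : IsStoppingTime F fun ω => (σ ω : WithTop ℕ)) (hσN : ∀ ω, σ ω ≤ N) :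
    EE.E 0 (stoppedValue X fun ω => σ ω) =ᵐ[μ] EE.E 0 (stoppedValue Ξ fun ω => σ ω) := by
  -- `R 0 = X_σ` and `R (N + 1) = Ξ_σ`; passing from `R t` to `R (t + 1)` only changes the value
  -- on `{σ = t} ∈ F t`, from `X t` to `Ξ t`, which `E t` does not see.
  set Y : ℕ → ℕ → Ω → ℝ := fun t s => if s < t then Ξ s else X s
  set R : ℕ → Ω → ℝ := fun t ω => Y t (σ ω) ω
  have hσN' ω : (σ ω : WithTop ℕ) ≤ N := WithTop.coe_le_coe.2 (hσN ω)
  have hR t : StronglyMeasurable[F N] (R t) := by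
    refine stronglyMeasurable_stoppedValue_of_forall_le (u := Y t) hσ hσN' fun s hs => ?_
    by_cases hst : s < t
    · simpa [Y, hst] using hΞ s hs
    · simpa [Y, hst] using (hX s hs).mono (F.mono hs)
  have hR2 t : MemLp (R t) 2 μ := by
    refine memLp_stoppedValue_of_forall_le (u := Y t) hσ hσN' fun s hs => ?_
    by_cases hst : s < t
    · simpa [Y, hst] using hΞ2 s hs
    · simpa [Y, hst] using hX2 s hs
  have hstep t (ht : t ≤ N) : EE.E t (R (t + 1)) =ᵐ[μ] EE.E t (R t) := by
    have hA : MeasurableSet[F t] {ω | σ ω = t} := by simpa using hσ.measurableSet_eq t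
    have hRsucc : R (t + 1) = {ω | σ ω = t}.piecewise (Ξ t) (R t) := by
      ext ω
      by_cases hω : σ ω = t
      · simp [R, Y, hω]
      · simp [R, Y, hω, le_iff_lt_or_eq]
    have hRself : {ω | σ ω = t}.piecewise (X t) (R t) = R t := by
      ext ω
      by_cases hω : σ ω = t <;> simp [R, Y, hω]
    have hX_eq : EE.E t (Ξ t) =ᵐ[μ] EE.E t (X t) :=
      (hrep t ht).trans (EE.E_of_stronglyMeasurable ht (hX t ht) (hX2 t ht)).symm
    have := EE.E_piecewise_congr ht hA (hΞ t ht) (hΞ2 t ht) ((hX t ht).mono (F.mono ht))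
      (hX2 t ht) (hR t) (hR2 t) hX_eq
    rwa [hRself, ← hRsucc] at this
  have hRlast : R (N + 1) = stoppedValue Ξ fun ω => σ ω := by
    funext ω
    show Y (N + 1) (σ ω) ω = Ξ (σ ω) ω
    simp [Y, Nat.lt_succ_of_le (hσN ω)]
  rw [← hRlast]
  exact (EE.E_zero_eq_of_forall_E_succ_eq hR hR2 hstep).symm

theorem E_zero_stoppedValue_le {X Ξ : ℕ → Ω → ℝ}
    (hX : ∀ t ≤ N, StronglyMeasurable[F t] (X t)) (hX2 : ∀ t ≤ N, MemLp (X t) 2 μ)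
    (hΞ : ∀ t ≤ N, StronglyMeasurable[F N] (Ξ t)) (hΞ2 : ∀ t ≤ N, MemLp (Ξ t) 2 μ)
    (hrep : ∀ t ≤ N, EE.E t (Ξ t) =ᵐ[μ] X t) {σ σ' : Ω → ℕ}
    (hσ : IsStoppingTime F fun ω => (σ ω : WithTop ℕ)) (hσN : ∀ ω, σ ω ≤ N)
    (hσ' : IsStoppingTime F fun ω => (σ' ω : WithTop ℕ)) (hσ'N : ∀ ω, σ' ω ≤ N)
    (hle : ∀ ω, Ξ (σ ω) ω ≤ Ξ (σ' ω) ω) :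
    EE.E 0 (stoppedValue X fun ω => σ ω) ≤ᵐ[μ] EE.E 0 (stoppedValue X fun ω => σ' ω) := by
  have hσN_top ω : (σ ω : WithTop ℕ) ≤ N := WithTop.coe_le_coe.2 (hσN ω)
  have hσ'N_top ω : (σ' ω : WithTop ℕ) ≤ N := WithTop.coe_le_coe.2 (hσ'N ω)
  have hmono := EE.mono 0 N.zero_le _ _
    (stronglyMeasurable_stoppedValue_of_forall_le hσ hσN_top hΞ)
    (memLp_stoppedValue_of_forall_le hσ hσN_top hΞ2)
    (stronglyMeasurable_stoppedValue_of_forall_le hσ' hσ'N_top hΞ)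
    (memLp_stoppedValue_of_forall_le hσ' hσ'N_top hΞ2) (.of_forall hle)
  exact ((EE.E_zero_stoppedValue_eq hX hX2 hΞ hΞ2 hrep hσ hσN).trans_le hmono).trans_eq
    (EE.E_zero_stoppedValue_eq hX hX2 hΞ hΞ2 hrep hσ' hσ'N).symm

end NLExp

section RunningMax

variable {Ω : Type*} {L : ℕ → Ω → ℝ} {s t u v : ℕ} {ω : Ω}

theorem le_runMax (hv : v ∈ Icc t u) : L v ω ≤ runMax L t u ω :=
  (le_fold_max _).2 (Or.inr ⟨v, hv, le_rfl⟩)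

theorem runMax_le_iff {c : ℝ} (htu : t ≤ u) :
    runMax L t u ω ≤ c ↔ ∀ v ∈ Icc t u, L v ω ≤ c := by
  rw [runMax, fold_max_le]
  exact ⟨fun h => h.2, fun h => ⟨h t (left_mem_Icc.2 htu), h⟩⟩

theorem runMax_le_runMax (htu : t ≤ u) (hsu : s ≤ u) (h : ∀ v ∈ Ico t s, L v ω ≤ L s ω) :
    runMax L t u ω ≤ runMax L s u ω := by
  refine (runMax_le_iff htu).2 fun v hv => ?_
  rcases lt_or_ge v s with hvs | hsv
  · exact (h v (mem_Ico.2 ⟨(mem_Icc.1 hv).1, hvs⟩)).trans (le_runMax (left_mem_Icc.2 hsu))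
  · exact le_runMax (mem_Icc.2 ⟨hsv, (mem_Icc.1 hv).2⟩)

theorem stronglyMeasurable_runMax {m : MeasurableSpace Ω}
    (hL : ∀ v ∈ Icc t u, StronglyMeasurable[m] (L v)) (htu : t ≤ u) :
    StronglyMeasurable[m] (runMax L t u) := by
  suffices ∀ S : Finset ℕ, (∀ v ∈ S, StronglyMeasurable[m] (L v)) →
      StronglyMeasurable[m] fun ω => S.fold max (L t ω) fun v => L v ω from
    this _ hL
  intro S
  induction S using Finset.induction with
  | empty => exact fun _ => by simpa using hL t (left_mem_Icc.2 htu)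
  | insert a S ha ih =>
    intro hS
    simp only [fold_insert ha]
    exact (hS a (mem_insert_self a S)).sup (ih fun v hv => hS v (mem_insert_of_mem hv))

theorem stronglyMeasurable_sum_runMax {m0 : MeasurableSpace Ω} {F : Filtration ℕ m0} {N : ℕ}
    (hL : ∀ t < N, StronglyMeasurable[F t] (L t)) (s : ℕ) :
    StronglyMeasurable[F N] fun ω => ∑ u ∈ Ico s N, runMax L s u ω :=
  Finset.stronglyMeasurable_fun_sum _ fun _ hu => stronglyMeasurable_runMax
    (fun v hv => (hL v ((mem_Icc.1 hv).2.trans_lt (mem_Ico.1 hu).2)).mono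
      (F.mono ((mem_Icc.1 hv).2.trans_lt (mem_Ico.1 hu).2).le)) (mem_Ico.1 hu).1

end RunningMax

noncomputable def firstBefore (P : ℕ → Prop) (N : ℕ) : ℕ :=
  sInf ({v | v < N ∧ P v} ∪ {N})

section FirstBefore

variable {P : ℕ → Prop} {N n v : ℕ}

theorem firstBefore_le : firstBefore P N ≤ N :=
  Nat.sInf_le (Or.inr rfl)

theorem not_of_lt_firstBefore (hv : v < firstBefore P N) : ¬P v := fun hP =>
  Nat.notMem_of_lt_sInf hv (Or.inl ⟨hv.trans_le firstBefore_le, hP⟩)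

theorem of_firstBefore_lt (h : firstBefore P N < N) : P (firstBefore P N) := by
  rcases Nat.sInf_mem (s := {v | v < N ∧ P v} ∪ {N}) ⟨N, Or.inr rfl⟩ with hmem | hmem
  · exact hmem.2
  · exact absurd hmem h.ne

theorem firstBefore_le_iff (hn : n < N) : firstBefore P N ≤ n ↔ ∃ v ≤ n, P v :=
  ⟨fun h => ⟨_, h, of_firstBefore_lt (h.trans_lt hn)⟩,
    fun ⟨_, hvn, hv⟩ => (Nat.sInf_le (Or.inl ⟨hvn.trans_lt hn, hv⟩)).trans hvn⟩

theorem isStoppingTime_firstBefore {Ω : Type*} {m0 : MeasurableSpace Ω} {F : Filtration ℕ m0}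
    {P : ℕ → Ω → Prop} (hP : ∀ v < N, MeasurableSet[F v] {ω | P v ω}) :
    IsStoppingTime F fun ω => (firstBefore (P · ω) N : WithTop ℕ) := by
  intro n
  suffices MeasurableSet[F n] {ω | firstBefore (P · ω) N ≤ n} by simpa using this
  rcases lt_or_ge n N with hn | hNn
  · have hset : {ω | firstBefore (P · ω) N ≤ n} = ⋃ v, ⋃ _ : v ≤ n, {ω | P v ω} := by
      ext ω
      simp [firstBefore_le_iff hn]
    rw [hset]
    exact .iUnion fun v => .iUnion fun hv => F.mono hv _ (hP v (hv.trans_lt hn))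
  · simp [firstBefore_le.trans hNn]

/-- Before the first nonnegative level all levels are negative, so starting the running maxima
there only drops nonpositive terms without lowering the later maxima; starting after it drops
nonnegative terms. -/
theorem sum_runMax_le_sum_runMax_firstBefore {Ω : Type*} {L : ℕ → Ω → ℝ} {ω : Ω} {t : ℕ}
    (ht : t ≤ N) :
    ∑ u ∈ Ico t N, runMax L t u ω ≤
      ∑ u ∈ Ico (firstBefore (0 ≤ L · ω) N) N, runMax L (firstBefore (0 ≤ L · ω) N) u ω := by
  set s := firstBefore (0 ≤ L · ω) N
  have hneg v (hv : v < s) : L v ω < 0 := not_le.1 (not_of_lt_firstBefore hv)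
  have hpos u (hu : u ∈ Ico s N) : 0 ≤ L s ω :=
    of_firstBefore_lt ((mem_Ico.1 hu).1.trans_lt (mem_Ico.1 hu).2)
  rcases le_total t s with hts | hst
  · rw [← sum_Ico_consecutive _ hts firstBefore_le]
    have hbefore : ∑ u ∈ Ico t s, runMax L t u ω ≤ 0 := sum_nonpos fun u hu =>
      (runMax_le_iff (mem_Ico.1 hu).1).2 fun v hv =>
        (hneg v ((mem_Icc.1 hv).2.trans_lt (mem_Ico.1 hu).2)).le
    have hafter : ∑ u ∈ Ico s N, runMax L t u ω ≤ ∑ u ∈ Ico s N, runMax L s u ω :=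
      sum_le_sum fun u hu => runMax_le_runMax (hts.trans (mem_Ico.1 hu).1) (mem_Ico.1 hu).1
        fun v hv => (hneg v (mem_Ico.1 hv).2).le.trans (hpos u hu)
    linarith
  · rw [← sum_Ico_consecutive _ hst ht]
    have hbetween : 0 ≤ ∑ u ∈ Ico s t, runMax L s u ω := sum_nonneg fun u hu =>
      (hpos u (mem_Ico.2 ⟨(mem_Ico.1 hu).1, (mem_Ico.1 hu).2.trans_le ht⟩)).trans
        (le_runMax (left_mem_Icc.2 (mem_Ico.1 hu).1))
    have hafter : ∑ u ∈ Ico t N, runMax L t u ω ≤ ∑ u ∈ Ico t N, runMax L s u ω :=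
      sum_le_sum fun u hu => runMax_le_runMax (mem_Ico.1 hu).1 (hst.trans (mem_Ico.1 hu).1)
        (by simp [Ico_eq_empty_of_le hst])
    linarith

end FirstBefore

theorem level_crossing_lower_passage_time_optimal_general
{Ω : Type*}
    [m0 : MeasurableSpace Ω]
    (μ : Measure Ω)
    (F : Filtration ℕ m0) (N : ℕ)
    (EE : NLExp μ F N)
(X : ℕ → Ω → ℝ)
    (hX_adapted : ∀ t, t ≤ N → StronglyMeasurable[F t] (X t))
    (hX_sqInt : ∀ t, t ≤ N → MemLp (X t) 2 μ)
(L : ℕ → Ω → ℝ)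
    (hL_adapted : ∀ t, t < N → StronglyMeasurable[F t] (L t))
    (hL_sqInt : ∀ t, t < N →
      MemLp (fun ω => ∑ u ∈ Finset.Ico t N, runMax L t u ω) 2 μ)
    (hL_rep : ∀ t, t < N →
      X t =ᵐ[μ] EE.E t fun ω => (∑ u ∈ Finset.Ico t N, runMax L t u ω) + X N ω)
    (τlow : Ω → ℕ)
    (hτlow_def : ∀ ω, τlow ω = sInf ({v | v < N ∧ 0 ≤ L v ω} ∪ {N})) :
    IsStoppingTime F (fun ω => (τlow ω : WithTop ℕ)) ∧ (∀ ω, τlow ω ≤ N) ∧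
    ∀ τ : Ω → ℕ, IsStoppingTime F (fun ω => (τ ω : WithTop ℕ)) → (∀ ω, τ ω ≤ N) →
      EE.E 0 (fun ω => X (τ ω) ω) ≤ᵐ[μ] EE.E 0 fun ω => X (τlow ω) ω := by
  obtain rfl : τlow = fun ω => firstBefore (0 ≤ L · ω) N := funext hτlow_def
  set Ξ : ℕ → Ω → ℝ := fun s ω => (∑ u ∈ Ico s N, runMax L s u ω) + X N ω
  have hΞN : Ξ N = X N := by simp [Ξ]
  have hΞ s (_ : s ≤ N) : StronglyMeasurable[F N] (Ξ s) :=
    (stronglyMeasurable_sum_runMax hL_adapted s).add (hX_adapted N le_rfl)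
  have hΞ2 s (hs : s ≤ N) : MemLp (Ξ s) 2 μ := by
    rcases hs.lt_or_eq with hs | rfl
    · exact (hL_sqInt s hs).add (hX_sqInt N le_rfl)
    · exact hΞN ▸ hX_sqInt s le_rfl
  have hrep t (ht : t ≤ N) : EE.E t (Ξ t) =ᵐ[μ] X t := by
    rcases ht.lt_or_eq with ht | rfl
    · exact (hL_rep t ht).symm
    · rw [hΞN]
      exact EE.E_of_stronglyMeasurable le_rfl (hX_adapted t le_rfl) (hX_sqInt t le_rfl)
  have hlow : IsStoppingTime F fun ω => (firstBefore (0 ≤ L · ω) N : WithTop ℕ) :=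
    isStoppingTime_firstBefore fun v hv =>
      measurableSet_le measurable_const (hL_adapted v hv).measurable
  refine ⟨hlow, fun _ => firstBefore_le, fun τ hτ hτN => ?_⟩
  exact EE.E_zero_stoppedValue_le hX_adapted hX_sqInt hΞ hΞ2 hrep hτ hτN hlow
    (fun _ => firstBefore_le) fun ω =>
      add_le_add_left (sum_runMax_le_sum_runMax_firstBefore (hτN ω)) _

/-- **Level-crossing principle, lower level-passage time.** The stopping time
`τ̲ := min{ v ∈ {0,...,N-1} : L_v ≥ 0 } ∧ N` is optimal for the optimal stopping
problem under the nonlinear expectation: `E 0 [X_τ] ≤ E 0 [X_τ̲]` a.s. for every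
stopping time `τ ∈ T_{0,N}`. -/
theorem level_crossing_lower_passage_time_optimal
{Ω : Type*} [TopologicalSpace Ω] [PolishSpace Ω]
    [m0 : MeasurableSpace Ω] [BorelSpace Ω]
    (μ : Measure Ω) [IsProbabilityMeasure μ]
    (F : Filtration ℕ m0) (N : ℕ) (hN : 1 ≤ N)
    (EE : NLExp μ F N)
(X : ℕ → Ω → ℝ)
    (hX_adapted : ∀ t, t ≤ N → StronglyMeasurable[F t] (X t))
    (hX_sqInt : ∀ t, t ≤ N → MemLp (X t) 2 μ)
(L : ℕ → Ω → ℝ)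
    (hL_adapted : ∀ t, t < N → StronglyMeasurable[F t] (L t))
    (hL_sqInt : ∀ t, t < N →
      MemLp (fun ω => ∑ u ∈ Finset.Ico t N, runMax L t u ω) 2 μ)
    (hL_rep : ∀ t, t < N →
      X t =ᵐ[μ] EE.E t fun ω => (∑ u ∈ Finset.Ico t N, runMax L t u ω) + X N ω)
    (τlow : Ω → ℕ)
    (hτlow_def : ∀ ω, τlow ω = sInf ({v | v < N ∧ 0 ≤ L v ω} ∪ {N})) :
    IsStoppingTime F (fun ω => (τlow ω : WithTop ℕ)) ∧ (∀ ω, τlow ω ≤ N) ∧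
    ∀ τ : Ω → ℕ, IsStoppingTime F (fun ω => (τ ω : WithTop ℕ)) → (∀ ω, τ ω ≤ N) →
      EE.E 0 (fun ω => X (τ ω) ω) ≤ᵐ[μ] EE.E 0 fun ω => X (τlow ω) ω :=
  level_crossing_lower_passage_time_optimal_general (m0 := m0) μ F N EE X hX_adapted hX_sqInt L
    hL_adapted hL_sqInt hL_rep τlow hτlow_def
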